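/- Let f : X → Y be a surjective morphism of varieties over an algebraically closed field such that every fiber of f is irreducible of the same dimension d, and suppose f is an open map. If Z ⊆ Y is irreducible, then f^{-1}(Z) is irreducible. -/
import Mathlib


theorem stmt13 {X Y : Type*} [TopologicalSpace X] [TopologicalSpace Y]
    (f : X → Y) (hcont : Continuous f) (hsurj : Function.Surjective f)
    (hopen : IsOpenMap f) (d : ℕ)
    (hfib : ∀ y : Y, IsIrreducible (f ⁻¹' {y}) ∧
      topologicalKrullDim ↥(f ⁻¹' {y}) = ((d : ℕ∞) : WithBot ℕ∞))
    (Z : Set Y) (hZ : IsIrreducible Z) :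
    IsIrreducible (f ⁻¹' Z) := by
  obtain ⟨⟨z, hz⟩, hZpre⟩ := hZ
  obtain ⟨x, hx⟩ := hsurj z
  refine ⟨⟨x, by simp [Set.mem_preimage, hx, hz]⟩, ?_⟩
  intro u v hu hv ⟨a, haZ, hau⟩ ⟨b, hbZ, hbv⟩
  -- f(u) and f(v) are open and meet Z
  have h1 : (Z ∩ f '' u).Nonempty := ⟨f a, haZ, a, hau, rfl⟩
  have h2 : (Z ∩ f '' v).Nonempty := ⟨f b, hbZ, b, hbv, rfl⟩
  obtain ⟨y, hyZ, ⟨p, hpu, hpy⟩, ⟨q, hqv, hqy⟩⟩ :=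
    hZpre (f '' u) (f '' v) (hopen u hu) (hopen v hv) h1 h2
  -- the fiber over y is irreducible and meets u and v
  obtain ⟨-, hfpre⟩ := (hfib y).1
  obtain ⟨w, hwfib, hwu, hwv⟩ :=
    hfpre u v hu hv ⟨p, hpy, hpu⟩ ⟨q, hqy, hqv⟩
  exact ⟨w, by simpa using hwfib ▸ hyZ, hwu, hwv⟩
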